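/- Let (R, 𝓑) be a bornological V-algebra and T ⊆ R a subset. The following are equivalent: (1) T has linear growth (i.e. T belongs to the linear growth bornology 𝓑^†); (2) T is contained in Σ_{i≥0} π^i S^{i+1} for some bounded S ∈ 𝓑; (3) T is contained in Σ_{i≥0} π^i S^{ci+d} for some bounded S ∈ 𝓑 and some c, d ∈ ℕ. In particular, 𝓑^† is also the smallest algebra bornology containing 𝓑 in which all V-submodules M ∈ 𝓑 (not just all M ∈ 𝓑^†) have spectral radius at most 1. -/

import Mathlib

open Pointwise

universe u v w

/-- A (convex) bornology on a `V`-module `X`: a family of *bounded* subsets containing all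
finite subsets, closed under subsets and finite unions, and such that the `V`-submodule
generated by a bounded subset is again bounded. -/
structure ModBornology (V : Type u) [CommRing V] (X : Type v) [AddCommGroup X] [Module V X] :
    Type v where
  IsBounded : Set X → Prop
  isBounded_of_finite : ∀ ⦃s : Set X⦄, s.Finite → IsBounded s
  isBounded_subset : ∀ ⦃s t : Set X⦄, IsBounded t → s ⊆ t → IsBounded s
  isBounded_union : ∀ ⦃s t : Set X⦄, IsBounded s → IsBounded t → IsBounded (s ∪ t)
  isBounded_span : ∀ ⦃s : Set X⦄, IsBounded s → IsBounded (Submodule.span V s : Set X)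

namespace Born

variable {V : Type u} [CommRing V] {X : Type v} [AddCommGroup X] [Module V X]
  {Y : Type w} [AddCommGroup Y] [Module V Y]

/-- `δ n → 0` in the `π`-adic topology on `V`. -/
def TendstoPiAdic (π : V) (δ : ℕ → V) : Prop :=
  ∀ m : ℕ, ∃ N : ℕ, ∀ n ≥ N, π ^ m ∣ δ n

/-- The sequence `x` `S`-converges to `l`. -/
def SConvTo (π : V) (S : Set X) (x : ℕ → X) (l : X) : Prop :=
  ∃ δ : ℕ → V, TendstoPiAdic π δ ∧ ∀ n : ℕ, x n - l ∈ δ n • S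

/-- The sequence `x` converges (bornologically) to `l`. -/
def ConvTo (π : V) (𝓑 : ModBornology V X) (x : ℕ → X) (l : X) : Prop :=
  ∃ S : Set X, 𝓑.IsBounded S ∧ SConvTo π S x l

/-- The sequence `x` is `S`-Cauchy. -/
def SCauchy (π : V) (S : Set X) (x : ℕ → X) : Prop :=
  ∃ δ : ℕ → V, TendstoPiAdic π δ ∧ ∀ l n m : ℕ, l ≤ n → l ≤ m → x n - x m ∈ δ l • S

/-- A bornological `V`-module is separated if limits of convergent sequences are unique. -/
def BornSeparated (π : V) (𝓑 : ModBornology V X) : Prop :=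
  ∀ (x : ℕ → X) (l₁ l₂ : X), ConvTo π 𝓑 x l₁ → ConvTo π 𝓑 x l₂ → l₁ = l₂

/-- A bornological `V`-module is complete if it is separated and every `S`-Cauchy sequence
`S'`-converges for some bounded `S'` depending only on `S`. -/
def BornComplete (π : V) (𝓑 : ModBornology V X) : Prop :=
  BornSeparated π 𝓑 ∧ ∀ S : Set X, 𝓑.IsBounded S → ∃ S' : Set X, 𝓑.IsBounded S' ∧
    ∀ x : ℕ → X, SCauchy π S x → ∃ l : X, SConvTo π S' x l

/-- A linear map is bounded if it maps bounded sets to bounded sets. -/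
def BoundedMap (𝓑X : ModBornology V X) (𝓑Y : ModBornology V Y) (f : X →ₗ[V] Y) : Prop :=
  ∀ ⦃s : Set X⦄, 𝓑X.IsBounded s → 𝓑Y.IsBounded (f '' s)

end Born

namespace Born

section SpectralRadius

variable {V : Type u} [CommRing V]

/-- `⌈log_ε r⌉`, the exponent appearing in the operation `r ⋆ M = π ^ ⌈log_ε r⌉ • M`. -/
noncomputable def cexp (ε r : ℝ) : ℤ := ⌈Real.log r / Real.log ε⌉

section Valg

variable {A : Type v} [Ring A] [Algebra V A]

/-- An algebra bornology: a module bornology for which multiplication is bounded. -/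
def IsAlgBorn (𝓑 : ModBornology V A) : Prop :=
  ∀ ⦃s t : Set A⦄, 𝓑.IsBounded s → 𝓑.IsBounded t → 𝓑.IsBounded (s * t)

/-- `r ⋆ M = π ^ ⌈log_ε r⌉ • M` for `r ≤ 1` in a `V`-algebra (nonnegative exponent). -/
noncomputable def starV (π : V) (ε r : ℝ) (M : Submodule V A) : Submodule V A :=
  π ^ ((cexp ε r).toNat) • M

/-- The submodule of finite sums `Σ_{n ≥ 0} r^{-n} ⋆ M ^ n`. -/
noncomputable def geomSumV (π : V) (ε r : ℝ) (M : Submodule V A) : Submodule V A :=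
  ⨆ n : ℕ, starV π ε (r ^ (-(n : ℤ))) (M ^ n)

/-- `ρ(M) ≤ 1` in a bornological `V`-algebra: the submodule `Σ_{n} r^{-n} ⋆ M^n` is
bounded for every `r > 1`. -/
noncomputable def SpecLeOne (π : V) (ε : ℝ) (𝓑 : ModBornology V A) (M : Submodule V A) : Prop :=
  ∀ r : ℝ, 1 < r → 𝓑.IsBounded (geomSumV π ε r M : Set A)

end Valg

section Kalg

variable (K : Type u) [Field K] [Algebra V K]
variable {A : Type v} [Ring A] [Algebra K A] [Algebra V A] [IsScalarTower V K A]

/-- Scalar multiplication by `c : K` as a `V`-linear map on a `K`-algebra. -/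
noncomputable def kSmul (c : K) : A →ₗ[V] A :=
  LinearMap.restrictScalars V (LinearMap.lsmul K A c)

/-- `r ⋆ M = π ^ ⌈log_ε r⌉ • M` in a `K`-algebra (integer exponent). -/
noncomputable def starK (π : V) (ε r : ℝ) (M : Submodule V A) : Submodule V A :=
  M.map (kSmul K ((algebraMap V K π) ^ (cexp ε r)))

/-- The submodule of finite sums `Σ_{n ≥ 0} r^{-n} ⋆ M ^ n` in a `K`-algebra. -/
noncomputable def geomSumK (π : V) (ε r : ℝ) (M : Submodule V A) : Submodule V A :=
  ⨆ n : ℕ, starK K π ε (r ^ (-(n : ℤ))) (M ^ n)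

/-- The spectral radius of a bounded `V`-submodule `M` of a bornological `K`-algebra:
the infimum (in `ℝ≥0∞`) of all `r > 0` such that `Σ_n r^{-n} ⋆ M^n` is bounded. -/
noncomputable def specRad (π : V) (ε : ℝ) (𝓑 : ModBornology V A) (M : Submodule V A) : ENNReal :=
  sInf {ρ : ENNReal | ∃ r : ℝ, 0 < r ∧ ρ = ENNReal.ofReal r ∧
    𝓑.IsBounded (geomSumK K π ε r M : Set A)}

/-- A bornological `K`-algebra structure: multiplication is bounded and multiplication
by `π⁻¹` (the inverse of multiplication by `π`) is bounded. -/
def IsKAlgBorn (π : V) (𝓑 : ModBornology V A) : Prop :=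
  IsAlgBorn 𝓑 ∧ ∀ ⦃s : Set A⦄, 𝓑.IsBounded s → 𝓑.IsBounded (kSmul (V := V) K ((algebraMap V K π)⁻¹) '' s)

end Kalg

end SpectralRadius

end Born

namespace Born

variable {V : Type u} [CommRing V] {A : Type v} [Ring A] [Algebra V A]

/-- `𝓑 ≤ 𝓒` for bornologies: every `𝓑`-bounded set is `𝓒`-bounded. -/
def BornLE (𝓑 𝓒 : ModBornology V A) : Prop :=
  ∀ ⦃s : Set A⦄, 𝓑.IsBounded s → 𝓒.IsBounded s

/-- `𝓛` is the linear growth bornology of the bornological `V`-algebra `(A, 𝓑)`: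
the smallest algebra bornology containing `𝓑` all of whose bounded `V`-submodules have
spectral radius at most `1`. -/
noncomputable def IsLinGrowthBorn (π : V) (ε : ℝ) (𝓑 𝓛 : ModBornology V A) : Prop :=
  IsAlgBorn 𝓛 ∧ BornLE 𝓑 𝓛 ∧
  (∀ M : Submodule V A, 𝓛.IsBounded (M : Set A) → SpecLeOne π ε 𝓛 M) ∧
  ∀ 𝓒 : ModBornology V A, IsAlgBorn 𝓒 → BornLE 𝓑 𝓒 →
    (∀ M : Submodule V A, 𝓒.IsBounded (M : Set A) → SpecLeOne π ε 𝓒 M) → BornLE 𝓛 𝓒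

end Born

open Born

/-!
The bounded sets of `𝓑^†` are the subsets of the submodules `Σ_k π^k N^(k+1)` with `N ∈ 𝓑`.
These form an algebra bornology because `Σ_k π^k N^(k+m) · Σ_k π^k N^(k+n)` lies in
`Σ_k π^k N^(k+m+n)`, and their submodules have spectral radius at most `1`: for `r > 1`,
`r^{-n} ⋆` supplies about `n · log_ε(1/r)` factors of `π`, which pay for replacing `N` by
`(1 + N)^q` with `q` large. Conversely, once `ρ(N) ≤ 1`, the submodule `Σ_k π^k N^(k+1)` lies in
`N + Σ_n ε^{n/2} ⋆ N^n` and so is bounded. Exponents `ci + d` reduce to `i + 1` by replacing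
`S` with `({1} ∪ S)^(c+d)`.
-/

namespace ModBornology

variable {V : Type u} [CommRing V] {R : Type v} [Ring R] [Algebra V R] (𝓑 : ModBornology V R)

lemma isBounded_sup {P Q : Submodule V R} (hP : 𝓑.IsBounded P) (hQ : 𝓑.IsBounded Q) :
    𝓑.IsBounded (P ⊔ Q : Submodule V R) := by
  have := 𝓑.isBounded_span (𝓑.isBounded_union hP hQ)
  rwa [Submodule.span_union, Submodule.span_eq, Submodule.span_eq] at this

lemma isBounded_pow (h𝓑 : IsAlgBorn 𝓑) {S : Set R} (hS : 𝓑.IsBounded S) :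
    ∀ n : ℕ, 𝓑.IsBounded (S ^ n)
  | 0 => by simpa using 𝓑.isBounded_of_finite (Set.finite_one (α := R))
  | n + 1 => by rw [pow_succ]; exact h𝓑 (isBounded_pow h𝓑 hS n) hS

lemma isBounded_one_union_pow (h𝓑 : IsAlgBorn 𝓑) {S : Set R} (hS : 𝓑.IsBounded S) (n : ℕ) :
    𝓑.IsBounded (({1} ∪ S) ^ n) :=
  𝓑.isBounded_pow h𝓑 (𝓑.isBounded_union (𝓑.isBounded_of_finite (Set.finite_singleton 1)) hS) n

lemma isBounded_one_sup_pow (h𝓑 : IsAlgBorn 𝓑) {N : Submodule V R} (hN : 𝓑.IsBounded N)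
    (n : ℕ) : 𝓑.IsBounded ((1 ⊔ N) ^ n : Submodule V R) := by
  rw [Submodule.one_eq_span, ← Submodule.span_eq N, ← Submodule.span_union, Submodule.span_pow]
  exact 𝓑.isBounded_span (𝓑.isBounded_one_union_pow h𝓑 hN n)

end ModBornology

lemma Submodule.pointwise_smul_le_of_dvd {V : Type u} [CommRing V] {M : Type v}
    [AddCommGroup M] [Module V M] {a b : V} (h : a ∣ b) (P : Submodule V M) : b • P ≤ a • P := by
  obtain ⟨c, rfl⟩ := h
  rintro _ ⟨x, hx, rfl⟩
  exact ⟨c • x, P.smul_mem c hx, (mul_smul a c x).symm⟩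

namespace Born

variable {V : Type u} [CommRing V] {R : Type v} [Ring R] [Algebra V R]

lemma cexp_zpow_neg (ε r : ℝ) (n : ℕ) :
    cexp ε (r ^ (-(n : ℤ))) = ⌈n * (Real.log r / -Real.log ε)⌉ := by
  rw [cexp, Real.log_zpow]
  push_cast
  ring_nf

noncomputable def piPowSum (π : V) (N : Submodule V R) (n : ℕ) : Submodule V R :=
  ⨆ k : ℕ, π ^ k • N ^ (k + n)

section PiPowSum

variable (π : V)

lemma smul_pow_le_piPowSum (N : Submodule V R) (k n : ℕ) :
    π ^ k • N ^ (k + n) ≤ piPowSum π N n :=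
  le_iSup (fun k => π ^ k • N ^ (k + n)) k

lemma piPowSum_mono {N P : Submodule V R} (h : N ≤ P) (n : ℕ) :
    piPowSum π N n ≤ piPowSum π P n :=
  iSup_mono fun _ => smul_le_smul_left _ (pow_le_pow_left' h _)

lemma le_piPowSum_one (N : Submodule V R) : N ≤ piPowSum π N 1 := by
  simpa using smul_pow_le_piPowSum π N 0 1

lemma piPowSum_mul_piPowSum (N : Submodule V R) (m n : ℕ) :
    piPowSum π N m * piPowSum π N n ≤ piPowSum π N (m + n) := by
  simp only [piPowSum, Submodule.iSup_mul, Submodule.mul_iSup]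
  refine iSup_le fun l => iSup_le fun k => ?_
  rw [← Submodule.mul_smul_mul_eq_smul_mul_smul, ← pow_add, ← pow_add,
    show k + m + (l + n) = k + l + (m + n) by ring]
  exact smul_pow_le_piPowSum π N (k + l) (m + n)

lemma pow_le_piPowSum {M N : Submodule V R} (h : M ≤ piPowSum π N 1) :
    ∀ n : ℕ, M ^ n ≤ piPowSum π N n
  | 0 => by simpa using smul_pow_le_piPowSum π N 0 0
  | n + 1 => by
    rw [pow_succ]
    exact (mul_le_mul' (pow_le_piPowSum h n) h).trans (piPowSum_mul_piPowSum π N n 1)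

/-- Surplus powers of `N` are absorbed by passing from `N` to `(1 ⊔ N)^q`. -/
lemma smul_piPowSum_le_piPowSum_one_sup_pow (N : Submodule V R) {e n q : ℕ} (hq : 1 ≤ q)
    (h : n ≤ q * (e + 1)) : π ^ e • piPowSum π N n ≤ piPowSum π ((1 ⊔ N) ^ q) 1 := by
  rw [piPowSum, Submodule.smul_iSup']
  refine iSup_le fun k => ?_
  have hexp : k + n ≤ q * (e + k + 1) := by nlinarith
  have hpow : N ^ (k + n) ≤ ((1 ⊔ N) ^ q) ^ (e + k + 1) := by
    rw [← pow_mul]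
    exact (pow_le_pow_left' le_sup_right _).trans (pow_le_pow_right' le_sup_left hexp)
  rw [smul_smul, ← pow_add]
  exact (smul_le_smul_left _ hpow).trans (smul_pow_le_piPowSum π _ (e + k) 1)

lemma piPowSum_one_le_sup_geomSumV {ε : ℝ} (hε0 : 0 < ε) (hε1 : ε < 1) (N : Submodule V R) :
    piPowSum π N 1 ≤ N ⊔ geomSumV π ε (ε ^ (-(2 : ℝ)⁻¹)) N := by
  refine iSup_le fun k => ?_
  rcases k with _ | j
  · simp
  have ht : Real.log (ε ^ (-(2 : ℝ)⁻¹)) / -Real.log ε = 2⁻¹ := by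
    have := (Real.log_neg hε0 hε1).ne
    rw [Real.log_rpow hε0]
    field_simp
  have he : (cexp ε ((ε ^ (-(2 : ℝ)⁻¹)) ^ (-((j + 1 + 1 : ℕ) : ℤ)))).toNat ≤ j + 1 := by
    rw [cexp_zpow_neg, ht, Int.toNat_le, Int.ceil_le]
    push_cast
    linarith [(j.cast_nonneg : (0 : ℝ) ≤ j)]
  refine le_sup_of_le_right (le_trans ?_ (le_iSup _ (j + 1 + 1)))
  exact Submodule.pointwise_smul_le_of_dvd (pow_dvd_pow π he) _

lemma piPowSum_one_subset_closure (N : Submodule V R) :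
    (piPowSum π N 1 : Set R) ⊆ AddSubmonoid.closure (⋃ i : ℕ, π ^ i • (N : Set R) ^ (i + 1)) := by
  suffices (piPowSum π N 1).toAddSubmonoid =
      AddSubmonoid.closure (⋃ i : ℕ, π ^ i • (N : Set R) ^ (i + 1)) from this ▸ subset_rfl
  simp only [piPowSum, Submodule.iSup_toAddSubmonoid, Submodule.pointwise_smul_toAddSubmonoid,
    Submodule.pow_toAddSubmonoid _ (Nat.succ_ne_zero _), AddSubmonoid.pow_eq_closure_pow_set,
    AddSubmonoid.smul_closure, AddSubmonoid.closure_iUnion]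
  rfl

lemma closure_subset_piPowSum_span (S : Set R) :
    (AddSubmonoid.closure (⋃ i : ℕ, π ^ i • S ^ (i + 1)) : Set R) ⊆
      piPowSum π (Submodule.span V S) 1 := by
  refine (AddSubmonoid.closure_le (S := (piPowSum π _ 1).toAddSubmonoid)).2
    (Set.iUnion_subset fun i => ?_)
  have hpow : S ^ (i + 1) ⊆ (Submodule.span V S ^ (i + 1) : Submodule V R) := by
    rw [Submodule.span_pow]
    exact Submodule.subset_span
  exact (Set.smul_set_mono hpow).trans (smul_pow_le_piPowSum π _ i 1)

lemma closure_subset_closure_one_union_pow (S : Set R) (c d : ℕ) :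
    (AddSubmonoid.closure (⋃ i : ℕ, π ^ i • S ^ (c * i + d)) : Set R) ⊆
      AddSubmonoid.closure (⋃ i : ℕ, π ^ i • (({1} ∪ S) ^ (c + d)) ^ (i + 1)) := by
  refine AddSubmonoid.closure_mono (Set.iUnion_mono fun i => Set.smul_set_mono ?_)
  rw [← pow_mul]
  exact Set.pow_subset_pow Set.subset_union_right (Or.inl rfl) (by nlinarith)

end PiPowSum

noncomputable def linGrowthBornology (π : V) (𝓑 : ModBornology V R) : ModBornology V R where
  IsBounded T := ∃ N : Submodule V R, 𝓑.IsBounded N ∧ T ⊆ piPowSum π N 1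
  isBounded_of_finite s hs := ⟨Submodule.span V s, 𝓑.isBounded_span (𝓑.isBounded_of_finite hs),
    Submodule.subset_span.trans (le_piPowSum_one π _)⟩
  isBounded_subset _ _ := fun ⟨N, hN, ht⟩ hst => ⟨N, hN, hst.trans ht⟩
  isBounded_union _ _ := fun ⟨N, hN, hs⟩ ⟨P, hP, ht⟩ => ⟨N ⊔ P, 𝓑.isBounded_sup hN hP,
    Set.union_subset (hs.trans (piPowSum_mono π le_sup_left 1))
      (ht.trans (piPowSum_mono π le_sup_right 1))⟩
  isBounded_span _ := fun ⟨N, hN, hs⟩ => ⟨N, hN, Submodule.span_le.2 hs⟩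

section LinGrowthBornology

variable (π : V) {𝓑 : ModBornology V R}

lemma bornLE_linGrowthBornology : BornLE 𝓑 (linGrowthBornology π 𝓑) := fun s hs =>
  ⟨Submodule.span V s, 𝓑.isBounded_span hs, Submodule.subset_span.trans (le_piPowSum_one π _)⟩

lemma isAlgBorn_linGrowthBornology (h𝓑 : IsAlgBorn 𝓑) : IsAlgBorn (linGrowthBornology π 𝓑) := by
  rintro s t ⟨N, hN, hs⟩ ⟨P, hP, ht⟩
  refine ⟨(1 ⊔ (N ⊔ P)) ^ 2, 𝓑.isBounded_one_sup_pow h𝓑 (𝓑.isBounded_sup hN hP) 2, ?_⟩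
  rintro _ ⟨x, hx, y, hy, rfl⟩
  have hxy : x * y ∈ piPowSum π (N ⊔ P) 1 * piPowSum π (N ⊔ P) 1 :=
    Submodule.mul_mem_mul (piPowSum_mono π le_sup_left 1 (hs hx))
      (piPowSum_mono π le_sup_right 1 (ht hy))
  have hle := smul_piPowSum_le_piPowSum_one_sup_pow π (N ⊔ P) (e := 0) (n := 2) (q := 2)
    one_le_two le_rfl
  rw [pow_zero, one_smul] at hle
  exact hle (piPowSum_mul_piPowSum π _ 1 1 hxy)

lemma specLeOne_linGrowthBornology {ε : ℝ} (hε0 : 0 < ε) (hε1 : ε < 1) (h𝓑 : IsAlgBorn 𝓑)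
    {M : Submodule V R} (hM : (linGrowthBornology π 𝓑).IsBounded M) :
    SpecLeOne π ε (linGrowthBornology π 𝓑) M := by
  intro r hr
  obtain ⟨N, hN, hMN⟩ := hM
  set t := Real.log r / -Real.log ε
  have ht : 0 < t := div_pos (Real.log_pos hr) (neg_pos.2 (Real.log_neg hε0 hε1))
  obtain ⟨q, hq⟩ := exists_nat_gt t⁻¹
  have hqt : 1 ≤ q * t := by rw [inv_lt_iff_one_lt_mul₀ ht] at hq; linarith
  have hq1 : 1 ≤ q := Nat.one_le_iff_ne_zero.2 (by rintro rfl; norm_num at hqt)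
  refine ⟨(1 ⊔ N) ^ q, 𝓑.isBounded_one_sup_pow h𝓑 hN q, ?_⟩
  show geomSumV π ε r M ≤ _
  refine iSup_le fun n => ?_
  set e := (cexp ε (r ^ (-(n : ℤ)))).toNat with he
  have hte : n * t ≤ e := by
    rw [he, cexp_zpow_neg]
    exact (Int.le_ceil _).trans (by exact_mod_cast Int.self_le_toNat _)
  have hnR : (n : ℝ) ≤ q * e := calc
    (n : ℝ) ≤ n * (q * t) := le_mul_of_one_le_right n.cast_nonneg hqt
    _ = q * (n * t) := by ring
    _ ≤ q * e := mul_le_mul_of_nonneg_left hte q.cast_nonneg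
  have hn : n ≤ q * (e + 1) :=
    (show n ≤ q * e by exact_mod_cast hnR).trans (Nat.mul_le_mul_left q e.le_succ)
  exact (smul_le_smul_left _ (pow_le_piPowSum π hMN n)).trans
    (smul_piPowSum_le_piPowSum_one_sup_pow π N hq1 hn)

lemma isBounded_piPowSum_one {ε : ℝ} (hε0 : 0 < ε) (hε1 : ε < 1) {𝓒 : ModBornology V R}
    {N : Submodule V R} (hN : 𝓒.IsBounded N) (hspec : SpecLeOne π ε 𝓒 N) :
    𝓒.IsBounded (piPowSum π N 1) := by
  have hr : 1 < ε ^ (-(2 : ℝ)⁻¹) :=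
    Real.one_lt_rpow_of_pos_of_lt_one_of_neg hε0 hε1 (by norm_num)
  exact 𝓒.isBounded_subset (𝓒.isBounded_sup hN (hspec _ hr))
    (piPowSum_one_le_sup_geomSumV π hε0 hε1 N)

lemma isBounded_of_subset_closure {ε : ℝ} (hε0 : 0 < ε) (hε1 : ε < 1) {𝓒 : ModBornology V R}
    (h𝓒 : BornLE 𝓑 𝓒) (hspec : ∀ M : Submodule V R, 𝓑.IsBounded M → SpecLeOne π ε 𝓒 M)
    {S T : Set R} (hS : 𝓑.IsBounded S)
    (hT : T ⊆ AddSubmonoid.closure (⋃ i : ℕ, π ^ i • S ^ (i + 1))) : 𝓒.IsBounded T :=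
  𝓒.isBounded_subset (isBounded_piPowSum_one π hε0 hε1 (h𝓒 (𝓑.isBounded_span hS))
    (hspec _ (𝓑.isBounded_span hS))) (hT.trans (closure_subset_piPowSum_span π S))

lemma exists_subset_closure_of_isBounded {T : Set R}
    (hT : (linGrowthBornology π 𝓑).IsBounded T) :
    ∃ S : Set R, 𝓑.IsBounded S ∧ T ⊆ AddSubmonoid.closure (⋃ i : ℕ, π ^ i • S ^ (i + 1)) :=
  let ⟨N, hN, hTN⟩ := hT
  ⟨N, hN, hTN.trans (piPowSum_one_subset_closure π N)⟩

end LinGrowthBornology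

end Born

theorem linearGrowth_characterisation_general
    {V : Type u} [CommRing V]
    (π : V)
    (ε : ℝ) (hε0 : 0 < ε) (hε1 : ε < 1)
    {R : Type v} [Ring R] [Algebra V R]
    (𝓑 : ModBornology V R) (h𝓑 : IsAlgBorn 𝓑)
    (𝓛 : ModBornology V R) (h𝓛 : IsLinGrowthBorn π ε 𝓑 𝓛) :
    (∀ T : Set R,
      [ 𝓛.IsBounded T,
        (∃ S : Set R, 𝓑.IsBounded S ∧
          T ⊆ (AddSubmonoid.closure (⋃ i : ℕ, (π ^ i • S ^ (i + 1) : Set R)) : Set R)),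
        (∃ (S : Set R) (c d : ℕ), 𝓑.IsBounded S ∧
          T ⊆ (AddSubmonoid.closure (⋃ i : ℕ, (π ^ i • S ^ (c * i + d) : Set R)) : Set R))
      ].TFAE)
    ∧ (∀ M : Submodule V R, 𝓑.IsBounded (M : Set R) → SpecLeOne π ε 𝓛 M)
    ∧ (∀ 𝓒 : ModBornology V R, IsAlgBorn 𝓒 → BornLE 𝓑 𝓒 →
        (∀ M : Submodule V R, 𝓑.IsBounded (M : Set R) → SpecLeOne π ε 𝓒 M) →
        BornLE 𝓛 𝓒) := by
  obtain ⟨-, h𝓛le, h𝓛spec, h𝓛min⟩ := h𝓛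
  have hmin : BornLE 𝓛 (linGrowthBornology π 𝓑) :=
    h𝓛min _ (isAlgBorn_linGrowthBornology π h𝓑) (bornLE_linGrowthBornology π)
      fun _ hM => specLeOne_linGrowthBornology π hε0 hε1 h𝓑 hM
  have h𝓑spec : ∀ M : Submodule V R, 𝓑.IsBounded (M : Set R) → SpecLeOne π ε 𝓛 M :=
    fun M hM => h𝓛spec M (h𝓛le hM)
  refine ⟨fun T => ?_, h𝓑spec, fun 𝓒 _ h𝓒 hspec T hT => ?_⟩
  · tfae_have 1 → 2 := fun hT => exists_subset_closure_of_isBounded π (hmin hT)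
    tfae_have 2 → 1 := fun ⟨S, hS, hT⟩ =>
      isBounded_of_subset_closure π hε0 hε1 h𝓛le h𝓑spec hS hT
    tfae_have 2 → 3 := fun ⟨S, hS, hT⟩ => ⟨S, 1, 1, hS, by simpa using hT⟩
    tfae_have 3 → 2 := fun ⟨S, c, d, hS, hT⟩ => ⟨_, 𝓑.isBounded_one_union_pow h𝓑 hS (c + d),
      hT.trans (closure_subset_closure_one_union_pow π S c d)⟩
    tfae_finish
  · obtain ⟨S, hS, hTS⟩ := exists_subset_closure_of_isBounded π (hmin hT)
    exact isBounded_of_subset_closure π hε0 hε1 h𝓒 hspec hS hTS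

/-- **Statement 7.** Let `(R, 𝓑)` be a bornological `V`-algebra with linear growth
bornology `𝓛 = 𝓑^†`, and `T ⊆ R`.  TFAE: (1) `T` has linear growth; (2) `T` is contained
in `Σ_{i≥0} π^i S^{i+1}` for some bounded `S ∈ 𝓑`; (3) `T` is contained in
`Σ_{i≥0} π^i S^{ci+d}` for some bounded `S ∈ 𝓑` and `c, d ∈ ℕ`.  In particular `𝓑^†` is
also the smallest algebra bornology containing `𝓑` in which every `V`-submodule `M ∈ 𝓑`
has spectral radius at most `1`. -/
theorem linearGrowth_characterisation
    {V : Type u} [CommRing V] [IsDomain V] [IsDiscreteValuationRing V]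
    (π : V) (hπ : Irreducible π) (hV : IsAdicComplete (Ideal.span {π}) V)
    (ε : ℝ) (hε0 : 0 < ε) (hε1 : ε < 1)
    {R : Type v} [Ring R] [Algebra V R]
    (𝓑 : ModBornology V R) (h𝓑 : IsAlgBorn 𝓑)
    (𝓛 : ModBornology V R) (h𝓛 : IsLinGrowthBorn π ε 𝓑 𝓛) :
    (∀ T : Set R,
      [ 𝓛.IsBounded T,
        (∃ S : Set R, 𝓑.IsBounded S ∧
          T ⊆ (AddSubmonoid.closure (⋃ i : ℕ, (π ^ i • S ^ (i + 1) : Set R)) : Set R)),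
        (∃ (S : Set R) (c d : ℕ), 𝓑.IsBounded S ∧
          T ⊆ (AddSubmonoid.closure (⋃ i : ℕ, (π ^ i • S ^ (c * i + d) : Set R)) : Set R))
      ].TFAE)
    ∧ (∀ M : Submodule V R, 𝓑.IsBounded (M : Set R) → SpecLeOne π ε 𝓛 M)
    ∧ (∀ 𝓒 : ModBornology V R, IsAlgBorn 𝓒 → BornLE 𝓑 𝓒 →
        (∀ M : Submodule V R, 𝓑.IsBounded (M : Set R) → SpecLeOne π ε 𝓒 M) →
        BornLE 𝓛 𝓒) :=
  linearGrowth_characterisation_general π ε hε0 hε1 𝓑 h𝓑 𝓛 h𝓛
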